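/- Every model of a universal first-order theory embeds into an existentially closed model of that theory: if every sentence of the L-theory T is universal and M is a model of T, then there is a model N of T that is existentially closed for T, together with an L-embedding of M into N. -/

import Mathlib

open FirstOrder FirstOrder.Language

universe u v

variable {L : FirstOrder.Language.{u, v}}

/-- A formula is *universal* if it has the form `∀ ȳ, χ` with `χ` quantifier-free. -/
def IsUniversalFormula {α : Type*} (φ : L.Formula α) : Prop :=
  ∃ (n : ℕ) (χ : L.BoundedFormula α n), χ.IsQF ∧ φ = χ.alls

/-- A formula is *existential* if it has the form `∃ ȳ, χ` with `χ` quantifier-free. -/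
def IsExistentialFormula {α : Type*} (φ : L.Formula α) : Prop :=
  ∃ (n : ℕ) (χ : L.BoundedFormula α n), χ.IsQF ∧ φ = χ.exs

/-- A theory is *model complete* if every embedding between models of it is elementary. -/
def IsModelComplete (T : L.Theory) : Prop :=
  ∀ (M N : Type (max u v)) [L.Structure M] [L.Structure N] [Nonempty M] [Nonempty N],
    M ⊨ T → N ⊨ T → ∀ (f : M ↪[L] N) (n : ℕ) (φ : L.Formula (Fin n)) (x : Fin n → M),
      φ.Realize (f ∘ x) ↔ φ.Realize x

/-- `M` is *existentially closed in `N` via* the embedding `f` if every existential formula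
with parameters from `M` that holds in `N` (of the images) already holds in `M`. -/
def IsECVia {M N : Type (max u v)} [L.Structure M] [L.Structure N] (f : M ↪[L] N) : Prop :=
  ∀ (k : ℕ) (φ : L.Formula (Fin k)), IsExistentialFormula φ →
    ∀ x : Fin k → M, φ.Realize (f ∘ x) → φ.Realize x

/-- `M` is *existentially closed for* the theory `T` if `M ⊨ T` and `M` is existentially
closed in every model of `T` via every embedding. -/
def IsECFor (T : L.Theory) (M : Type (max u v)) [L.Structure M] [Nonempty M] : Prop :=
  M ⊨ T ∧ ∀ (N : Type (max u v)) [L.Structure N] [Nonempty N], N ⊨ T →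
    ∀ f : M ↪[L] N, IsECVia f

/-- `T_∀` : the set of universal sentences that are logical consequences of `T`. -/
def universalPart (T : L.Theory) : L.Theory :=
  {φ : L.Sentence | IsUniversalFormula φ ∧ T ⊨ᵇ φ}

/-- `Tstar` is a *model companion* of `T`: `Tstar` is model complete, every model of `T`
embeds into a model of `Tstar`, and every model of `Tstar` embeds into a model of `T`. -/
def IsModelCompanion (T Tstar : L.Theory) : Prop :=
  IsModelComplete Tstar ∧
  (∀ (M : Type (max u v)) [L.Structure M] [Nonempty M], M ⊨ T →
     ∃ (N : Type (max u v)) (_ : L.Structure N) (_ : Nonempty N),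
       N ⊨ Tstar ∧ Nonempty (M ↪[L] N)) ∧
  (∀ (M : Type (max u v)) [L.Structure M] [Nonempty M], M ⊨ Tstar →
     ∃ (N : Type (max u v)) (_ : L.Structure N) (_ : Nonempty N),
       N ⊨ T ∧ Nonempty (M ↪[L] N))

/-!
Given a model `A` of `T`, Zorn's lemma and compactness give a maximal set `S` of existential
sentences with parameters from `A` that is consistent with `T` and the quantifier-free diagram of
`A`. A model `B` of all of these is a model of `T` extending `A`, and any existential statement
about `A` that holds in a `T`-model extending `B` is consistent with `S`, hence lies in `S`, hence
already holds in `B`. Iterating this step along `ℕ` and taking the union of the chain gives `N`: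
it is a model of `T` because `T` is universal, and it is existentially closed because every finite
tuple of `N` lives in some stage.
-/

theorem IsExistentialFormula.realize_embedding {M N α : Type*} [L.Structure M] [L.Structure N]
    {φ : L.Formula α} (hφ : IsExistentialFormula φ) (f : M ↪[L] N) {v : α → M}
    (h : φ.Realize v) : φ.Realize (f ∘ v) := by
  obtain ⟨n, χ, hχ, rfl⟩ := hφ
  obtain ⟨xs, hxs⟩ := BoundedFormula.realize_exs.1 h
  exact BoundedFormula.realize_exs.2 ⟨f ∘ xs, (hχ.realize_embedding f).2 hxs⟩

def IsECStepFor (T : L.Theory) {A B : Type*} [L.Structure A] [L.Structure B] (f : A ↪[L] B) :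
    Prop :=
  ∀ (C : Type (max u v)) [L.Structure C] [Nonempty C], C ⊨ T → ∀ g : B ↪[L] C,
    ∀ (k : ℕ) (φ : L.Formula (Fin k)), IsExistentialFormula φ → ∀ a : Fin k → A,
      φ.Realize (g ∘ f ∘ a) → φ.Realize (f ∘ a)

namespace FirstOrder.Language

section Parameters

variable {A : Type*}

def Formula.withParams {α : Type*} (φ : L.Formula α) (a : α → A) : L[[A]].Sentence :=
  Formula.equivSentence (φ.relabel a)

theorem Formula.realize_withParams {α : Type*} (C : Type*) [L.Structure C] [L[[A]].Structure C]
    [(L.lhomWithConstants A).IsExpansionOn C] (φ : L.Formula α) (a : α → A) :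
    C ⊨ φ.withParams a ↔ φ.Realize fun i => (L.con (a i) : C) := by
  rw [withParams, realize_equivSentence, realize_relabel]
  rfl

variable (L A) in
def existentialParamSentences : L[[A]].Theory :=
  {ψ | ∃ (k : ℕ) (φ : L.Formula (Fin k)) (a : Fin k → A),
    IsExistentialFormula φ ∧ ψ = φ.withParams a}

theorem realize_of_mem_existentialParamSentences {B C : Type*} [L.Structure B] [L.Structure C]
    [L[[A]].Structure B] [(L.lhomWithConstants A).IsExpansionOn B]
    [L[[A]].Structure C] [(L.lhomWithConstants A).IsExpansionOn C]
    (g : B ↪[L] C) (hg : ∀ a : A, (L.con a : C) = g (L.con a)) {ψ : L[[A]].Sentence}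
    (hψ : ψ ∈ L.existentialParamSentences A) (h : B ⊨ ψ) : C ⊨ ψ := by
  obtain ⟨k, φ, a, hφ, rfl⟩ := hψ
  rw [Formula.realize_withParams] at h ⊢
  simp only [hg]
  exact hφ.realize_embedding g h

variable [L.Structure A] {B : Type*} [L.Structure B]

def Embedding.ofRealizeQF (j : A → B)
    (hj : ∀ (k : ℕ) (φ : L.Formula (Fin k)) (x : Fin k → A),
      BoundedFormula.IsQF φ → φ.Realize x → φ.Realize (j ∘ x)) : A ↪[L] B :=
  have hiff (k : ℕ) (φ : L.Formula (Fin k)) (x : Fin k → A) (hφ : BoundedFormula.IsQF φ) :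
      φ.Realize (j ∘ x) ↔ φ.Realize x :=
    ⟨fun h => by_contra fun hn => (hj k φ.not x hφ.not hn) h, hj k φ x hφ⟩
  { toFun := j
    inj' := fun x y h => by
      simpa using (hiff 2 ((Term.var 0).equal (Term.var 1)) ![x, y]
        (BoundedFormula.IsAtomic.equal _ _).isQF).1 (by simpa using h)
    map_fun' := fun {n} F x => by
      have h := hiff (n + 1) (Formula.graph F) (Fin.cons (Structure.funMap F x) x)
        (Formula.isAtomic_graph F).isQF
      rw [Formula.realize_graph, Fin.comp_cons, Formula.realize_graph] at h
      rw [eq_comm, h]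
    map_rel' := fun {n} R x => by
      simpa [Function.comp_def] using
        hiff n (R.formula Term.var) x (BoundedFormula.IsAtomic.rel _ _).isQF }

variable (L A) in
def qfDiagram : L[[A]].Theory :=
  {ψ | ∃ (k : ℕ) (φ : L.Formula (Fin k)) (a : Fin k → A),
    BoundedFormula.IsQF φ ∧ φ.Realize a ∧ ψ = φ.withParams a}

theorem model_qfDiagram {C : Type*} [L.Structure C] [L[[A]].Structure C]
    [(L.lhomWithConstants A).IsExpansionOn C] (g : A ↪[L] C) (hg : ∀ a, (L.con a : C) = g a) :
    C ⊨ L.qfDiagram A := by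
  refine (Theory.model_iff _).2 ?_
  rintro _ ⟨k, φ, a, hφ, ha, rfl⟩
  rw [Formula.realize_withParams]
  have h := (hφ.realize_embedding g (xs := default)).2 ha
  rw [Unique.eq_default (g ∘ default)] at h
  simp only [hg]
  exact h

def Embedding.ofModelsQFDiagram (C : Type*) [L.Structure C] [L[[A]].Structure C]
    [(L.lhomWithConstants A).IsExpansionOn C] [C ⊨ L.qfDiagram A] : A ↪[L] C :=
  Embedding.ofRealizeQF (fun a => (L.con a : C)) fun k φ x hφ hx =>
    (Formula.realize_withParams C φ x).1
      (Theory.realize_sentence_of_mem (L.qfDiagram A)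
        (show _ ∈ L.qfDiagram A from ⟨k, φ, x, hφ, hx, rfl⟩))

end Parameters

theorem Theory.exists_maximal_isSatisfiable_union {T E : L.Theory} (hT : T.IsSatisfiable) :
    ∃ S ⊆ E, (T ∪ S).IsSatisfiable ∧
      ∀ φ ∈ E, (T ∪ insert φ S).IsSatisfiable → φ ∈ S := by
  let P : Set L.Theory := {S | S ⊆ E ∧ (T ∪ S).IsSatisfiable}
  have hub (c) (hc : c ⊆ P) (hchain : IsChain (· ⊆ ·) c) (hne : c.Nonempty) :
      ∃ ub ∈ P, ∀ s ∈ c, s ⊆ ub := by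
    refine ⟨⋃₀ c, ⟨Set.sUnion_subset fun s hs => (hc hs).1, ?_⟩,
      fun s hs => Set.subset_sUnion_of_mem hs⟩
    have : Nonempty c := hne.to_subtype
    rw [Set.sUnion_eq_iUnion, Set.union_iUnion]
    refine (isSatisfiable_directed_union_iff ?_).2 fun s => (hc s.2).2
    exact hchain.directedOn.directed_val.mono_comp _ fun _ _ h => Set.union_subset_union_right T h
  obtain ⟨S, -, hS⟩ := zorn_subset_nonempty P hub ∅
    ⟨Set.empty_subset E, by rwa [Set.union_empty]⟩
  exact ⟨S, hS.prop.1, hS.prop.2, fun φ hφ h =>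
    hS.mem_of_prop_insert ⟨Set.insert_subset hφ hS.prop.1, h⟩⟩

theorem DirectedSystem.natLERec_succ {G : ℕ → Type*} [∀ n, L.Structure (G n)]
    (f : ∀ n, G n ↪[L] G (n + 1)) (n : ℕ) :
    DirectedSystem.natLERec f n (n + 1) n.le_succ = f n := by
  ext x
  rw [DirectedSystem.coe_natLERec]
  exact (Nat.leRecOn_succ le_rfl x).trans (congrArg (f n) (Nat.leRecOn_self x))

namespace DirectLimit

theorem model_of_isUniversalFormula {ι : Type*} [Preorder ι] [IsDirectedOrder ι] [Nonempty ι]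
    {G : ι → Type*} [∀ i, L.Structure (G i)] {F : ∀ i j, i ≤ j → G i ↪[L] G j}
    [DirectedSystem G fun i j h => F i j h] {T : L.Theory}
    (hT : ∀ φ ∈ T, IsUniversalFormula φ) (hG : ∀ i, G i ⊨ T) : DirectLimit G F ⊨ T := by
  refine (Theory.model_iff T).2 fun φ hφ => ?_
  obtain ⟨n, χ, hχ, rfl⟩ := hT φ hφ
  refine BoundedFormula.realize_alls.2 fun xs => ?_
  obtain ⟨i, y, rfl⟩ := exists_quotient_mk'_sigma_mk'_eq G F xs
  have h := (hχ.realize_embedding (of L ι G F i) (v := default) (xs := y)).2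
    (BoundedFormula.realize_alls.1 ((hG i).realize_of_mem _ hφ) y)
  rwa [Unique.eq_default (of L ι G F i ∘ default)] at h

theorem isECFor_of_isECStepFor {ι : Type} [Preorder ι] [IsDirectedOrder ι] [Nonempty ι]
    {G : ι → Type (max u v)} [∀ i, L.Structure (G i)] {F : ∀ i j, i ≤ j → G i ↪[L] G j}
    [DirectedSystem G fun i j h => F i j h] [Nonempty (DirectLimit G F)] {T : L.Theory}
    (hT : DirectLimit G F ⊨ T) (hstep : ∀ i, ∃ j, ∃ hij : i ≤ j, IsECStepFor T (F i j hij)) :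
    IsECFor T (DirectLimit G F) := by
  refine ⟨hT, fun N _ _ hN g k φ hφ x hx => ?_⟩
  obtain ⟨i, y, rfl⟩ := exists_quotient_mk'_sigma_mk'_eq G F x
  obtain ⟨j, hij, hij_step⟩ := hstep i
  have hof : of L ι G F j ∘ F i j hij ∘ y = fun a => ⟦.mk F i (y a)⟧ := funext fun _ => of_f
  have hj : φ.Realize (F i j hij ∘ y) :=
    hij_step N hN (g.comp (of L ι G F j)) k φ hφ y (by rwa [← hof] at hx)
  rw [← hof]
  exact hφ.realize_embedding (of L ι G F j) hj

end DirectLimit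

end FirstOrder.Language

theorem exists_isECStepFor (T : L.Theory) (A : T.ModelType.{u, v, max u v}) :
    ∃ (B : T.ModelType.{u, v, max u v}) (f : A ↪[L] B), IsECStepFor T f := by
  let base := (L.lhomWithConstants A).onTheory T ∪ L.qfDiagram A
  have hbase : base.IsSatisfiable := by
    let _ : (constantsOn A).Structure A := constantsOn.structure id
    have : A ⊨ base := Theory.model_union_iff.2
      ⟨((L.lhomWithConstants A).onTheory_model T).2 A.is_model,
        model_qfDiagram (Embedding.refl L A) fun _ => rfl⟩
    exact Theory.Model.isSatisfiable A
  obtain ⟨S, hSE, ⟨B⟩, hmax⟩ :=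
    Theory.exists_maximal_isSatisfiable_union (E := L.existentialParamSentences A) hbase
  let _ : L.Structure B := (L.lhomWithConstants A).reduct B
  have : (L.lhomWithConstants A).IsExpansionOn B := LHom.isExpansionOn_reduct _ B
  have hBbase : B ⊨ base := B.is_model.mono Set.subset_union_left
  have : B ⊨ L.qfDiagram A := hBbase.mono Set.subset_union_right
  have : B ⊨ T := ((L.lhomWithConstants A).onTheory_model T).1 (hBbase.mono Set.subset_union_left)
  let f := Embedding.ofModelsQFDiagram (L := L) (A := A) B
  refine ⟨Theory.ModelType.of T B, f, fun C _ _ hC (g : B ↪[L] C) k φ hφ a ha => ?_⟩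
  let _ : (constantsOn A).Structure C := constantsOn.structure (g ∘ f)
  have hCbase : C ⊨ base := Theory.model_union_iff.2
    ⟨((L.lhomWithConstants A).onTheory_model T).2 hC, model_qfDiagram (g.comp f) fun _ => rfl⟩
  have hCS : C ⊨ S := (Theory.model_iff S).2 fun ψ hψ =>
    realize_of_mem_existentialParamSentences g (fun _ => rfl) (hSE hψ)
      (B.is_model.realize_of_mem ψ (Set.mem_union_right _ hψ))
  have hCφ : C ⊨ φ.withParams a := (Formula.realize_withParams C φ a).2 ha
  have : C ⊨ base ∪ insert (φ.withParams a) S :=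
    Theory.model_union_iff.2 ⟨hCbase, Theory.model_insert_iff.2 ⟨hCφ, hCS⟩⟩
  have hmem := hmax _ ⟨k, φ, a, hφ, rfl⟩ (Theory.Model.isSatisfiable C)
  exact (Formula.realize_withParams B φ a).1
    (B.is_model.realize_of_mem _ (Set.mem_union_right _ hmem))

noncomputable def ecChain (T : L.Theory) (M : T.ModelType.{u, v, max u v}) :
    ℕ → T.ModelType.{u, v, max u v}
  | 0 => M
  | n + 1 => (exists_isECStepFor T (ecChain T M n)).choose

noncomputable def ecChainStep (T : L.Theory) (M : T.ModelType.{u, v, max u v}) (n : ℕ) :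
    ecChain T M n ↪[L] ecChain T M (n + 1) :=
  (exists_isECStepFor T (ecChain T M n)).choose_spec.choose

theorem isECStepFor_ecChainStep (T : L.Theory) (M : T.ModelType.{u, v, max u v}) (n : ℕ) :
    IsECStepFor T (ecChainStep T M n) :=
  (exists_isECStepFor T (ecChain T M n)).choose_spec.choose_spec

/-- Every model of a universal theory embeds into an existentially closed model of the
theory. -/
theorem embeds_into_ec_model (T : L.Theory)
    (hT : ∀ φ ∈ T, IsUniversalFormula φ)
    (M : Type (max u v)) [L.Structure M] [Nonempty M] (hM : M ⊨ T) :
    ∃ (N : Type (max u v)) (_ : L.Structure N) (_ : Nonempty N),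
      IsECFor T N ∧ Nonempty (M ↪[L] N) := by
  let M₀ : T.ModelType.{u, v, max u v} := Theory.ModelType.of T M
  set F := DirectedSystem.natLERec (ecChainStep T M₀) with hF
  have : Nonempty (Language.DirectLimit _ F) :=
    ⟨Language.DirectLimit.of L ℕ _ F 0 (Classical.arbitrary M)⟩
  have hN : Language.DirectLimit _ F ⊨ T :=
    DirectLimit.model_of_isUniversalFormula hT fun n => (ecChain T M₀ n).is_model
  refine ⟨_, _, _, DirectLimit.isECFor_of_isECStepFor hN fun n => ⟨n + 1, n.le_succ, ?_⟩,
    ⟨Language.DirectLimit.of L ℕ _ F 0⟩⟩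
  rw [hF, DirectedSystem.natLERec_succ]
  exact isECStepFor_ecChainStep T M₀ n
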